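/- Non-evenness of the squared ground state (the key step of the paper's Lemma on non-evenness): under the stated hypotheses, u(x)² > u(−x)² for every x ≥ 3; in particular the function x ↦ u(x)² is not even on (−4,−3) ∪ (3,4). -/

import Mathlib

/-!
Put `Z x = W (-x)`. Like `u` on `(-2, ∞)`, where `α` vanishes, `Z` solves `y'' = (x² - λ) y`, so
the Wronskian of `u` and `Z` is constant there; it vanishes at `+∞` because `Z(x) = u(-x)` for
`x ≥ 3` and `u, u'` decay at both ends (`u'` because `u` is convex outside `[-2, 2]`). Hence
`Z = k u` on `(-2, ∞)` with `k = W 0 / u 0`, i.e. `u(-x) = k u(x)` for `x ≥ 3`. On the other hand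
`(u² (W/u)')' = -t α u W ≤ 0` and `W/u = 1` up to `-3`, so `W/u` is nonincreasing, and strictly
so across the bump of `α`: `0 < k < 1`.
-/

open Filter Set Topology

lemma ContDiff.differentiable_deriv_of_two {f : ℝ → ℝ} (hf : ContDiff ℝ 2 f) :
    Differentiable ℝ (deriv f) := by
  simpa only [iteratedDeriv_one] using hf.differentiable_iteratedDeriv 1 (by norm_num)

lemma lt_of_deriv_nonpos_of_deriv_neg {f : ℝ → ℝ} {a b x₀ : ℝ} (hx₀ : x₀ ∈ Ioo a b)
    (hfc : ContinuousOn f (Icc a b)) (hfd : DifferentiableOn ℝ f (Ioo a b))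
    (hf' : ∀ x ∈ Ioo a b, deriv f x ≤ 0) (hfx₀ : deriv f x₀ < 0) : f b < f a := by
  have hab : a ≤ b := (hx₀.1.trans hx₀.2).le
  have hanti : AntitoneOn f (Icc a b) :=
    antitoneOn_of_deriv_nonpos (convex_Icc a b) hfc (by rwa [interior_Icc])
      (by rwa [interior_Icc])
  refine (hanti (left_mem_Icc.2 hab) (right_mem_Icc.2 hab) hab).lt_of_ne fun hba => ?_
  have hconst : ∀ y ∈ Ioo a b, f y = f a := fun y hy =>
    le_antisymm (hanti (left_mem_Icc.2 hab) (Ioo_subset_Icc_self hy) hy.1.le)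
      (hba ▸ hanti (Ioo_subset_Icc_self hy) (right_mem_Icc.2 hab) hy.2.le)
  have hloc : f =ᶠ[𝓝 x₀] fun _ => f a := eventuallyEq_of_mem (Ioo_mem_nhds hx₀.1 hx₀.2) hconst
  simp [hloc.deriv_eq] at hfx₀

lemma deriv_eq_of_eqOn_Iic {f g : ℝ → ℝ} {a x : ℝ} (h : EqOn f g (Iic a)) (hx : x < a) :
    deriv f x = deriv g x :=
  (eventuallyEq_of_mem (Iio_mem_nhds hx) fun _ hy => h (mem_Iic.2 (le_of_lt hy))).deriv_eq

lemma deriv_deriv_comp_neg (f : ℝ → ℝ) (x : ℝ) :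
    deriv (deriv fun y => f (-y)) x = deriv (deriv f) (-x) := by
  rw [funext (deriv_comp_neg f), deriv.fun_neg, deriv_comp_neg (deriv f), neg_neg]

lemma sub_le_deriv_le_sub_of_monotoneOn {f : ℝ → ℝ} {x : ℝ} (hf : Differentiable ℝ f)
    (hmono : MonotoneOn (deriv f) (Icc (x - 1) (x + 1))) :
    f x - f (x - 1) ≤ deriv f x ∧ deriv f x ≤ f (x + 1) - f x := by
  have hx : x ∈ Icc (x - 1) (x + 1) := ⟨by linarith, by linarith⟩
  obtain ⟨c, hc, hc'⟩ := exists_deriv_eq_slope f (by linarith : x - 1 < x)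
    hf.continuous.continuousOn fun y _ => (hf y).differentiableWithinAt
  obtain ⟨d, hd, hd'⟩ := exists_deriv_eq_slope f (by linarith : x < x + 1)
    hf.continuous.continuousOn fun y _ => (hf y).differentiableWithinAt
  simp only [sub_sub_cancel, add_sub_cancel_left, div_one] at hc' hd'
  exact ⟨hc' ▸ hmono ⟨hc.1.le, by linarith [hc.2]⟩ hx hc.2.le,
    hd' ▸ hmono hx ⟨by linarith [hd.1], hd.2.le⟩ hd.1.le⟩

lemma tendsto_deriv_cocompact_of_deriv_deriv_nonneg {f : ℝ → ℝ} {R L : ℝ}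
    (hf : Differentiable ℝ f) (hf' : Differentiable ℝ (deriv f))
    (hconv : ∀ x, R ≤ |x| → 0 ≤ deriv (deriv f) x) (hlim : Tendsto f (cocompact ℝ) (𝓝 L)) :
    Tendsto (deriv f) (cocompact ℝ) (𝓝 0) := by
  have hshift (c : ℝ) : Tendsto (fun x => f (x + c)) (cocompact ℝ) (𝓝 L) :=
    hlim.comp (Homeomorph.addRight c).map_cocompact.le
  have hbounds : ∀ᶠ x in cocompact ℝ,
      f x - f (x - 1) ≤ deriv f x ∧ deriv f x ≤ f (x + 1) - f x := by
    filter_upwards [tendsto_norm_cocompact_atTop.eventually_ge_atTop (R + 1)] with x hx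
    refine sub_le_deriv_le_sub_of_monotoneOn hf <|
      monotoneOn_of_deriv_nonneg (convex_Icc _ _) hf'.continuous.continuousOn
        hf'.differentiableOn fun y hy => hconv y ?_
    rw [interior_Icc] at hy
    rw [Real.norm_eq_abs] at hx
    linarith [abs_sub_abs_le_abs_sub x y,
      abs_lt.2 (⟨by linarith [hy.2], by linarith [hy.1]⟩ : -1 < x - y ∧ x - y < 1)]
  have hlow : Tendsto (fun x => f x - f (x - 1)) (cocompact ℝ) (𝓝 0) := by
    simpa [sub_eq_add_neg] using hlim.sub (hshift (-1))
  have hup : Tendsto (fun x => f (x + 1) - f x) (cocompact ℝ) (𝓝 0) := by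
    simpa using (hshift 1).sub hlim
  exact tendsto_of_tendsto_of_tendsto_of_le_of_le' hlow hup
    (hbounds.mono fun _ h => h.1) (hbounds.mono fun _ h => h.2)

noncomputable def wronskian (f g : ℝ → ℝ) (x : ℝ) : ℝ := f x * deriv g x - deriv f x * g x

lemma hasDerivAt_wronskian_of_deriv_deriv_eq {f g : ℝ → ℝ} {x p r : ℝ} (hf : ContDiff ℝ 2 f)
    (hg : ContDiff ℝ 2 g) (hfx : deriv (deriv f) x = p * f x)
    (hgx : deriv (deriv g) x = r * g x) :
    HasDerivAt (wronskian f g) ((r - p) * f x * g x) x := by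
  have hf' := (hf.differentiable (by norm_num) x).hasDerivAt
  have hg' := (hg.differentiable (by norm_num) x).hasDerivAt
  have hf'' := (hf.differentiable_deriv_of_two x).hasDerivAt
  have hg'' := (hg.differentiable_deriv_of_two x).hasDerivAt
  exact ((hf'.mul hg'').sub (hf''.mul hg')).congr_deriv (by rw [hfx, hgx]; ring)

lemma hasDerivAt_div_of_wronskian {f g : ℝ → ℝ} {x : ℝ} (hf : DifferentiableAt ℝ f x)
    (hg : DifferentiableAt ℝ g x) (hgx : g x ≠ 0) :
    HasDerivAt (fun y => f y / g y) (wronskian g f x / g x ^ 2) x :=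
  (hf.hasDerivAt.div hg.hasDerivAt hgx).congr_deriv (by rw [wronskian]; ring)

lemma tendsto_wronskian_zero {f g : ℝ → ℝ} {l : Filter ℝ} (hf : Tendsto f l (𝓝 0))
    (hf' : Tendsto (deriv f) l (𝓝 0)) (hg : Tendsto g l (𝓝 0)) (hg' : Tendsto (deriv g) l (𝓝 0)) :
    Tendsto (wronskian f g) l (𝓝 0) := by
  show Tendsto (fun x => f x * deriv g x - deriv f x * g x) l (𝓝 0)
  simpa using (hf.mul hg').sub (hf'.mul hg)

lemma tendsto_wronskian_comp_neg_atTop {u W : ℝ → ℝ} {a : ℝ}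
    (hu : Tendsto u (cocompact ℝ) (𝓝 0)) (hu' : Tendsto (deriv u) (cocompact ℝ) (𝓝 0))
    (hWu : EqOn W u (Iic a)) : Tendsto (wronskian u fun y => W (-y)) atTop (𝓝 0) := by
  have hbot : atBot ≤ cocompact ℝ := cocompact_eq_atBot_atTop (α := ℝ) ▸ le_sup_left
  have htop : atTop ≤ cocompact ℝ := cocompact_eq_atBot_atTop (α := ℝ) ▸ le_sup_right
  have hW : Tendsto W atBot (𝓝 0) := (hu.mono_left hbot).congr'
    ((eventually_le_atBot a).mono fun _ hx => (hWu hx).symm)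
  have hW' : Tendsto (deriv W) atBot (𝓝 0) := (hu'.mono_left hbot).congr'
    ((eventually_lt_atBot a).mono fun x hx => (deriv_eq_of_eqOn_Iic hWu hx).symm)
  refine tendsto_wronskian_zero (hu.mono_left htop) (hu'.mono_left htop)
    (hW.comp tendsto_neg_atTop_atBot) ?_
  simpa [funext (deriv_comp_neg W)] using (hW'.comp tendsto_neg_atTop_atBot).neg

lemma eqOn_div_mul_of_tendsto_wronskian {f g V : ℝ → ℝ} {a c : ℝ} (hf : ContDiff ℝ 2 f)
    (hg : ContDiff ℝ 2 g) (hfeq : ∀ x ∈ Ioi a, deriv (deriv f) x = V x * f x)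
    (hgeq : ∀ x ∈ Ioi a, deriv (deriv g) x = V x * g x) (hg0 : ∀ x ∈ Ioi a, g x ≠ 0)
    (hlim : Tendsto (wronskian g f) atTop (𝓝 0)) (hc : c ∈ Ioi a) :
    ∀ x ∈ Ioi a, f x = f c / g c * g x := by
  have hw : ∀ x ∈ Ioi a, HasDerivAt (wronskian g f) 0 x := fun x hx =>
    (hasDerivAt_wronskian_of_deriv_deriv_eq hg hf (hgeq x hx) (hfeq x hx)).congr_deriv
      (by simp)
  have hw0 : ∀ x ∈ Ioi a, wronskian g f x = 0 := by
    intro x hx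
    refine tendsto_nhds_unique (tendsto_const_nhds.congr' ?_) hlim
    filter_upwards [eventually_gt_atTop a] with y hy
    exact isOpen_Ioi.is_const_of_deriv_eq_zero isPreconnected_Ioi
      (fun z hz => (hw z hz).differentiableAt.differentiableWithinAt)
      (fun z hz => (hw z hz).deriv) hx hy
  have hr : ∀ x ∈ Ioi a, HasDerivAt (fun y => f y / g y) 0 x := fun x hx =>
    (hasDerivAt_div_of_wronskian (hf.differentiable (by norm_num) x)
      (hg.differentiable (by norm_num) x) (hg0 x hx)).congr_deriv (by rw [hw0 x hx, zero_div])
  intro x hx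
  have hconst : f x / g x = f c / g c :=
    isOpen_Ioi.is_const_of_deriv_eq_zero isPreconnected_Ioi
      (fun z hz => (hr z hz).differentiableAt.differentiableWithinAt)
      (fun z hz => (hr z hz).deriv) hx hc
  rw [← hconst, div_mul_cancel₀ _ (hg0 x hx)]

lemma div_lt_div_of_wronskian_nonpos {u W : ℝ → ℝ} {a b y : ℝ} (hu : Differentiable ℝ u)
    (hW : Differentiable ℝ W) (hupos : ∀ x ∈ Icc a b, 0 < u x)
    (hw : ∀ x ∈ Icc a b, wronskian u W x ≤ 0) (hy : y ∈ Ioo a b) (hwy : wronskian u W y < 0) :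
    W b / u b < W a / u a := by
  have hr : ∀ x ∈ Icc a b, HasDerivAt (fun y => W y / u y) (wronskian u W x / u x ^ 2) x :=
    fun x hx => hasDerivAt_div_of_wronskian (hW x) (hu x) (hupos x hx).ne'
  refine lt_of_deriv_nonpos_of_deriv_neg hy
    (fun x hx => (hr x hx).continuousAt.continuousWithinAt)
    (fun x hx => (hr x (Ioo_subset_Icc_self hx)).differentiableAt.differentiableWithinAt)
    (fun x hx => ?_) ?_
  · rw [(hr x (Ioo_subset_Icc_self hx)).deriv]
    exact div_nonpos_of_nonpos_of_nonneg (hw x (Ioo_subset_Icc_self hx)) (sq_nonneg _)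
  · rw [(hr y (Ioo_subset_Icc_self hy)).deriv]
    exact div_neg_of_neg_of_pos hwy (pow_pos (hupos y (Ioo_subset_Icc_self hy)) 2)

lemma div_lt_div_of_wronskian_eq_zero {u W V q : ℝ → ℝ} {a b x₀ : ℝ} (hu : ContDiff ℝ 2 u)
    (hW : ContDiff ℝ 2 W) (hueq : ∀ x ∈ Icc a b, deriv (deriv u) x = (V x + q x) * u x)
    (hWeq : ∀ x ∈ Icc a b, deriv (deriv W) x = V x * W x) (hq : ∀ x ∈ Icc a b, 0 ≤ q x)
    (hx₀ : x₀ ∈ Ioo a b) (hqx₀ : 0 < q x₀) (hupos : ∀ x ∈ Icc a b, 0 < u x)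
    (hWpos : ∀ x ∈ Icc a b, 0 < W x) (hwa : wronskian u W a = 0) :
    W b / u b < W a / u a := by
  have hw : ∀ x ∈ Icc a b, HasDerivAt (wronskian u W) (-(q x * u x * W x)) x := fun x hx =>
    (hasDerivAt_wronskian_of_deriv_deriv_eq hu hW (hueq x hx) (hWeq x hx)).congr_deriv (by ring)
  have hw' : ∀ x ∈ Icc a b, deriv (wronskian u W) x ≤ 0 := fun x hx => (hw x hx).deriv ▸
    neg_nonpos.2 (mul_nonneg (mul_nonneg (hq x hx) (hupos x hx).le) (hWpos x hx).le)
  have hanti : AntitoneOn (wronskian u W) (Icc a b) :=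
    antitoneOn_of_deriv_nonpos (convex_Icc a b)
      (fun x hx => (hw x hx).continuousAt.continuousWithinAt)
      (fun x hx => (hw x (interior_subset hx)).differentiableAt.differentiableWithinAt)
      fun x hx => hw' x (interior_subset hx)
  obtain ⟨y, hx₀y, hyb⟩ := exists_between hx₀.2
  have hsub : Icc a y ⊆ Icc a b := Icc_subset_Icc_right hyb.le
  have hwy : wronskian u W y < 0 := by
    refine hwa ▸ lt_of_deriv_nonpos_of_deriv_neg ⟨hx₀.1, hx₀y⟩
      (fun x hx => (hw x (hsub hx)).continuousAt.continuousWithinAt)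
      (fun x hx => (hw x (hsub (Ioo_subset_Icc_self hx))).differentiableAt.differentiableWithinAt)
      (fun x hx => hw' x (hsub (Ioo_subset_Icc_self hx))) ?_
    have hx₀' := Ioo_subset_Icc_self hx₀
    rw [(hw x₀ hx₀').deriv, neg_lt_zero]
    exact mul_pos (mul_pos hqx₀ (hupos x₀ hx₀')) (hWpos x₀ hx₀')
  exact div_lt_div_of_wronskian_nonpos (hu.differentiable (by norm_num))
    (hW.differentiable (by norm_num)) hupos
    (fun x hx => hwa ▸ hanti (left_mem_Icc.2 (hx.1.trans hx.2)) hx hx.1)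
    ⟨hx₀.1.trans hx₀y, hyb⟩ hwy

theorem ground_state_squared_not_even_general
    (α : ℝ → ℝ) (hαnonneg : ∀ x, 0 ≤ α x)
    (hαsupp : ∀ x, x ∉ Set.Ioo (-3 : ℝ) (-2) → α x = 0)
    (x₀ : ℝ) (hαpos : 0 < α x₀)
    (t : ℝ) (ht : 0 < t)
    (lam : ℝ) (hlam2 : lam < 2)
    (u : ℝ → ℝ) (hu : ContDiff ℝ 2 u) (hupos : ∀ x, 0 < u x)
    (hueq : ∀ x, -deriv (deriv u) x + (x ^ 2 + t * α x) * u x = lam * u x)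
    (hulim : Tendsto u (cocompact ℝ) (nhds 0))
    (W : ℝ → ℝ) (hW : ContDiff ℝ 2 W)
    (hWeq : ∀ x, deriv (deriv W) x = (x ^ 2 - lam) * W x)
    (hWu : ∀ x ≤ (-3 : ℝ), W x = u x)
    (hWpos : ∀ x ≤ (3 : ℝ), 0 < W x) :
    (∀ x ≥ (3 : ℝ), (u (-x)) ^ 2 < (u x) ^ 2) ∧
      ¬(∀ x ∈ Set.Ioo (-4 : ℝ) (-3) ∪ Set.Ioo (3 : ℝ) 4, (u x) ^ 2 = (u (-x)) ^ 2) := by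
  have hx₀ : x₀ ∈ Ioo (-3) (-2) := by_contra fun h => hαpos.ne' (hαsupp x₀ h)
  have hu'' : ∀ x, deriv (deriv u) x = (x ^ 2 - lam + t * α x) * u x := fun x => by
    linear_combination -hueq x
  have hconv : ∀ x, 2 ≤ |x| → 0 ≤ deriv (deriv u) x := fun x hx => by
    rw [hu'' x]
    have : 4 ≤ x ^ 2 := by nlinarith [sq_abs x, abs_nonneg x]
    exact mul_nonneg (by nlinarith [hαnonneg x]) (hupos x).le
  have hu'lim : Tendsto (deriv u) (cocompact ℝ) (𝓝 0) :=
    tendsto_deriv_cocompact_of_deriv_deriv_nonneg (hu.differentiable (by norm_num))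
      hu.differentiable_deriv_of_two hconv hulim
  have hsym : ∀ x ∈ Ioi (-2 : ℝ), W (-x) = W 0 / u 0 * u x := by
    simpa only [neg_zero] using eqOn_div_mul_of_tendsto_wronskian (f := fun y => W (-y))
      (V := fun y => y ^ 2 - lam) (hW.comp contDiff_neg) hu
      (fun x _ => by rw [deriv_deriv_comp_neg, hWeq, neg_sq])
      (fun x hx => by rw [hu'' x, hαsupp x fun h => (not_lt.2 hx.le) h.2, mul_zero, add_zero])
      (fun x _ => (hupos x).ne') (tendsto_wronskian_comp_neg_atTop hulim hu'lim hWu)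
      (show (0 : ℝ) ∈ Ioi (-2) by norm_num)
  have hk1 : W 0 / u 0 < 1 := by
    have h := div_lt_div_of_wronskian_eq_zero (a := -4) (b := 0) (V := fun y => y ^ 2 - lam)
      (q := fun y => t * α y) hu hW (fun x _ => hu'' x) (fun x _ => hWeq x)
      (fun x _ => mul_nonneg ht.le (hαnonneg x)) ⟨by linarith [hx₀.1], by linarith [hx₀.2]⟩
      (mul_pos ht hαpos) (fun x _ => hupos x) (fun x hx => hWpos x (by linarith [hx.2]))
      (by rw [wronskian, hWu (-4) (by norm_num), deriv_eq_of_eqOn_Iic hWu (by norm_num)]; ring)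
    rwa [hWu (-4) (by norm_num), div_self (hupos _).ne'] at h
  have hk0 : 0 < W 0 / u 0 := div_pos (hWpos 0 (by norm_num)) (hupos 0)
  have hsq : ∀ x ≥ (3 : ℝ), u (-x) ^ 2 < u x ^ 2 := by
    intro x hx
    rw [← hWu (-x) (by linarith), hsym x (by rw [mem_Ioi]; linarith), mul_pow]
    exact mul_lt_of_lt_one_left (pow_pos (hupos x) 2) (pow_lt_one₀ hk0.le hk1 two_ne_zero)
  exact ⟨hsq, fun h => (hsq (7 / 2) (by norm_num)).ne'
    (h (7 / 2) (Or.inr ⟨by norm_num, by norm_num⟩))⟩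

/-- Non-evenness of the squared ground state: `u(x)² > u(-x)²` for `x ≥ 3`; in
particular `u²` is not even on `(-4,-3) ∪ (3,4)`. -/
theorem ground_state_squared_not_even
    (α : ℝ → ℝ) (hαc : Continuous α) (hαnonneg : ∀ x, 0 ≤ α x)
    (hαsupp : ∀ x, x ∉ Set.Ioo (-3 : ℝ) (-2) → α x = 0)
    (x₀ : ℝ) (hαpos : 0 < α x₀)
    (t : ℝ) (ht : 0 < t)
    (lam : ℝ) (hlam1 : 1 < lam) (hlam2 : lam < 2)
    (u : ℝ → ℝ) (hu : ContDiff ℝ 2 u) (hupos : ∀ x, 0 < u x)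
    (hueq : ∀ x, -deriv (deriv u) x + (x ^ 2 + t * α x) * u x = lam * u x)
    (hulim : Tendsto u (cocompact ℝ) (nhds 0))
    (W : ℝ → ℝ) (hW : ContDiff ℝ 2 W)
    (hWeq : ∀ x, deriv (deriv W) x = (x ^ 2 - lam) * W x)
    (hWu : ∀ x ≤ (-3 : ℝ), W x = u x)
    (hWpos : ∀ x ≤ (3 : ℝ), 0 < W x)
    (hWtop : Tendsto W atTop atBot) :
    (∀ x ≥ (3 : ℝ), (u (-x)) ^ 2 < (u x) ^ 2) ∧
      ¬(∀ x ∈ Set.Ioo (-4 : ℝ) (-3) ∪ Set.Ioo (3 : ℝ) 4, (u x) ^ 2 = (u (-x)) ^ 2) :=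
  ground_state_squared_not_even_general α hαnonneg hαsupp x₀ hαpos t ht lam hlam2 u hu hupos hueq
    hulim W hW hWeq hWu hWpos
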